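/- arXiv:math/0612844 — 2 statements merged into one kernel-verified Lean document; each statement's English description precedes it below -/
import Mathlib

section
/- For the colored permutation group G_{r,n} = Z_r ≀ S_n with r ≥ 1 and n ≥ 1, the signed generating function satisfies ∑_{π ∈ G_{r,n}} q^{exc(π)} (−1)^{cyc(π)} = −(q^r − 1)^n / (q − 1), where exc(π) = r·exc_A(π) + csum(π), exc_A(π) = #{i : z_i = 0 and σ(i) > i}, and csum(π) = z_1 + ⋯ + z_n. -/
open Finset Polynomial

/-- `exc_A` for a colored permutation `π = (z, σ) ∈ ℤ_r ≀ S_n`: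
the number of indices `i` with zero color and `σ(i) > i`. -/
def excAc {r n : ℕ} (π : (Fin n → ZMod r) × Equiv.Perm (Fin n)) : ℕ :=
  (Finset.univ.filter fun i => (π.1 i).val = 0 ∧ i < π.2 i).card

/-- `csum`: the sum of the colors (taken as representatives in `{0,…,r−1}`). -/
def csumc {r n : ℕ} (π : (Fin n → ZMod r) × Equiv.Perm (Fin n)) : ℕ :=
  ∑ i, (π.1 i).val

/-- The excedance number `exc(π) = r·exc_A(π) + csum(π)`. -/
def excc {r n : ℕ} (π : (Fin n → ZMod r) × Equiv.Perm (Fin n)) : ℕ :=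
  r * excAc π + csumc π

/-- Number of cycles of the underlying permutation, counting fixed points. -/
def cyc {n : ℕ} (σ : Equiv.Perm (Fin n)) : ℕ :=
  (Finset.univ.filter fun i => σ i = i).card + σ.cycleType.card

/-!
Summing over the colours first, each position `i` contributes a factor
`[r]_x = 1 + x + ⋯ + x^(r-1)`, multiplied by `x` when `i < σ i` (the colour `0` then weighs `x^r`).
This leaves `[r]_x^n · ∑_σ (-1)^cyc σ · x^permExc σ`, and since `(-1)^cyc σ = (-1)^n sign σ`, the
remaining sum is `(-1)^n` times the determinant of the matrix with entries `x` strictly below the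
diagonal and `1` elsewhere. Subtracting each column from the next makes that matrix triangular
with diagonal `1, 1 - x, …, 1 - x`.
-/

section

variable {R : Type*}

def permExc {n : ℕ} (σ : Equiv.Perm (Fin n)) : ℕ := #{i | i < σ i}

def excMatrix [One R] (n : ℕ) (x : R) : Matrix (Fin n) (Fin n) R :=
  Matrix.of fun i j => if j < i then x else 1

theorem sum_zmod_val_eq_sum_range [AddCommMonoid R] (r : ℕ) [NeZero r] (f : ℕ → R) :
    ∑ c : ZMod r, f c.val = ∑ k ∈ range r, f k := by
  obtain ⟨s, rfl⟩ : ∃ s, r = s + 1 := Nat.exists_eq_succ_of_ne_zero (NeZero.ne r)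
  exact Fin.sum_univ_eq_sum_range f (s + 1)

theorem sum_zmod_pow_ite_add_val [CommSemiring R] (r : ℕ) [NeZero r] (P : Prop) [Decidable P]
    (x : R) :
    ∑ c : ZMod r, x ^ (r * (if c.val = 0 ∧ P then 1 else 0) + c.val)
      = (if P then x else 1) * ∑ k ∈ range r, x ^ k := by
  rw [sum_zmod_val_eq_sum_range r fun k => x ^ (r * (if k = 0 ∧ P then 1 else 0) + k)]
  obtain ⟨s, rfl⟩ : ∃ s, r = s + 1 := Nat.exists_eq_succ_of_ne_zero (NeZero.ne r)
  by_cases hP : P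
  · rw [sum_range_succ', mul_sum, sum_range_succ]
    simp [hP, pow_succ']
  · simp [hP]

theorem excc_eq_sum {r n : ℕ} (z : Fin n → ZMod r) (σ : Equiv.Perm (Fin n)) :
    excc (z, σ) = ∑ i, (r * (if (z i).val = 0 ∧ i < σ i then 1 else 0) + (z i).val) := by
  rw [sum_add_distrib, ← mul_sum, excc, csumc, excAc, card_filter]

theorem sum_colorings_pow_excc [CommSemiring R] (r : ℕ) [NeZero r] {n : ℕ}
    (σ : Equiv.Perm (Fin n)) (x : R) :
    ∑ z : Fin n → ZMod r, x ^ excc (z, σ) = x ^ permExc σ * (∑ k ∈ range r, x ^ k) ^ n := by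
  simp_rw [excc_eq_sum, ← prod_pow_eq_pow_sum]
  rw [← Fintype.prod_sum (fun i (c : ZMod r) =>
      x ^ (r * (if c.val = 0 ∧ i < σ i then 1 else 0) + c.val))]
  simp_rw [sum_zmod_pow_ite_add_val]
  rw [prod_mul_distrib, ← prod_filter, prod_const, prod_const, card_univ, Fintype.card_fin,
    permExc]

theorem neg_one_pow_cyc [Ring R] {n : ℕ} (σ : Equiv.Perm (Fin n)) :
    (-1 : R) ^ cyc σ = (-1) ^ n * ((Equiv.Perm.sign σ : ℤ) : R) := by
  have hfix : #{i | σ i = i} = n - #σ.support := by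
    rw [show ({i | σ i = i} : Finset (Fin n)) = σ.supportᶜ by ext; simp, card_compl,
      Fintype.card_fin]
  have hsupp : #σ.support ≤ n := by simpa using card_le_univ σ.support
  rw [Equiv.Perm.sign_of_cycleType, Equiv.Perm.sum_cycleType, cyc, hfix]
  push_cast
  rw [← pow_add, show n + (#σ.support + σ.cycleType.card)
      = (n - #σ.support + σ.cycleType.card) + 2 * #σ.support by omega,
    pow_add _ _ (2 * _), pow_mul, neg_one_sq, one_pow, mul_one]

theorem det_excMatrix [CommRing R] (n : ℕ) (x : R) :
    (excMatrix (n + 1) x).det = (1 - x) ^ n := by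
  set B : Matrix (Fin (n + 1)) (Fin (n + 1)) R :=
    Matrix.of fun i j => if j = 0 then (if 0 < i then x else 1) else if i = j then 1 - x else 0
  have hB : B.IsLowerTriangular := fun i j (hij : i < j) => by
    simp [B, hij.ne, ((Fin.zero_le i).trans_lt hij).ne']
  have hcols : (excMatrix (n + 1) x).det = B.det := by
    refine Matrix.det_eq_of_forall_col_eq_smul_add_pred (fun _ => 1)
      (fun i => by simp [excMatrix, B]) fun i j => ?_
    simp only [excMatrix, B, Matrix.of_apply, Fin.succ_ne_zero, if_false, one_mul]
    simp only [Fin.lt_def, Fin.ext_iff, Fin.val_succ, Fin.val_castSucc]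
    split_ifs <;> first | (exfalso; omega) | ring
  rw [hcols, Matrix.det_of_isLowerTriangular B hB, Fin.prod_univ_succ]
  simp [B]

theorem sum_sign_mul_pow_permExc [CommRing R] (n : ℕ) (x : R) :
    ∑ σ : Equiv.Perm (Fin (n + 1)), ((Equiv.Perm.sign σ : ℤ) : R) * x ^ permExc σ
      = (1 - x) ^ n := by
  rw [← det_excMatrix, Matrix.det_apply]
  refine sum_congr rfl fun σ _ => ?_
  simp [excMatrix, Units.smul_def, prod_ite, permExc]

theorem sum_neg_one_pow_cyc_mul_pow_permExc [CommRing R] (n : ℕ) (x : R) :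
    ∑ σ : Equiv.Perm (Fin (n + 1)), (-1 : R) ^ cyc σ * x ^ permExc σ = -(x - 1) ^ n := by
  simp_rw [neg_one_pow_cyc, mul_assoc, ← mul_sum, sum_sign_mul_pow_permExc]
  rw [← neg_sub x 1, neg_pow (x - 1), ← mul_assoc, ← pow_add, Odd.neg_one_pow ⟨n, by ring⟩,
    neg_one_mul]

theorem sum_colored_neg_one_pow_cyc_mul_pow_excc [CommRing R] (r : ℕ) [NeZero r] (n : ℕ)
    (x : R) :
    ∑ π : (Fin n → ZMod r) × Equiv.Perm (Fin n), (-1 : R) ^ cyc π.2 * x ^ excc π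
      = (∑ σ : Equiv.Perm (Fin n), (-1 : R) ^ cyc σ * x ^ permExc σ)
          * (∑ k ∈ range r, x ^ k) ^ n := by
  rw [Fintype.sum_prod_type_right, sum_mul]
  refine sum_congr rfl fun σ _ => ?_
  rw [mul_assoc, ← sum_colorings_pow_excc, mul_sum]

end

theorem signed_exc_sum_colored (r n : ℕ) [NeZero r] (hn : 1 ≤ n) :
    ((X : Polynomial ℚ) - 1) *
        ∑ π : (Fin n → ZMod r) × Equiv.Perm (Fin n),
          (-1 : Polynomial ℚ) ^ cyc π.2 * X ^ excc π
      = -(((X : Polynomial ℚ) ^ r - 1) ^ n) := by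
  obtain ⟨m, rfl⟩ : ∃ m, n = m + 1 := ⟨n - 1, by omega⟩
  rw [sum_colored_neg_one_pow_cyc_mul_pow_excc, sum_neg_one_pow_cyc_mul_pow_permExc,
    ← geom_sum_mul, mul_pow]
  ring
end

section
/- Let r_1,…,r_k, n be positive integers with n ≥ 2, r = r_1⋯r_k, K(q) = ∑_{m=1}^k r_{m+1}⋯r_k ∑_{t=1}^{r_m−1} q^{t·r/r_m}, and let D_n be the set of elements of (Z_{r_1} × ⋯ × Z_{r_k}) ≀ S_n whose underlying permutation is a derangement. Define Q_n(q) = ∑_{π ∈ D_n} q^{exc(π)} (−1)^{cyc(π)}. Then Q_n(q) = (1 + K(q))·(Q_{n−1}(q) − (q^r + K(q))^{n−1}). -/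
open Finset Polynomial

/-- A color vector for the group `ℤ_{r 0} × ⋯ × ℤ_{r (k-1)}`. -/
abbrev Color (k : ℕ) (r : Fin k → ℕ) := ∀ j : Fin k, ZMod (r j)

/-- An element of the wreath product `(ℤ_{r 0} × ⋯ × ℤ_{r (k-1)}) ≀ S_n`:
a color vector for each digit together with an underlying permutation. -/
abbrev GElt (k n : ℕ) (r : Fin k → ℕ) := (Fin n → Color k r) × Equiv.Perm (Fin n)

/-- `r = r_1 ⋯ r_k`. -/
def totR (k : ℕ) (r : Fin k → ℕ) : ℕ := ∏ j, r j

/-- `csum_p(π) = ∑_i z_i^p · ∏_{t<p} χ(z_i^t = 0)`, colors as representatives. -/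
def csump {k n : ℕ} (r : Fin k → ℕ) (Z : Fin n → Color k r) (p : Fin k) : ℕ :=
  ∑ i, (Z i p).val * ∏ t ∈ Finset.Iio p, if (Z i t).val = 0 then 1 else 0

/-- `csum(π) = ∑_p csum_p(π) · ∏_{q ≠ p} r_q`. -/
def csum {k n : ℕ} (r : Fin k → ℕ) (Z : Fin n → Color k r) : ℕ :=
  ∑ p, csump r Z p * ∏ q ∈ Finset.univ.erase p, r q

/-- `exc_A(π)`: number of `i` with zero color vector and `σ(i) > i`. -/
def excA {k n : ℕ} (r : Fin k → ℕ) (π : GElt k n r) : ℕ :=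
  (Finset.univ.filter fun i => (∀ j, (π.1 i j).val = 0) ∧ i < π.2 i).card

/-- `exc(π) = r·exc_A(π) + ∑_p csum_p(π)·∏_{q≠p} r_q`. -/
def exc {k n : ℕ} (r : Fin k → ℕ) (π : GElt k n r) : ℕ :=
  totR k r * excA r π + csum r π.1

/-- `K(q) = ∑_{m=1}^k r_{m+1}⋯r_k ∑_{t=1}^{r_m−1} q^{t·r/r_m}`. -/
noncomputable def Kpoly (k : ℕ) (r : Fin k → ℕ) : Polynomial ℚ :=
  ∑ m : Fin k, ((∏ j ∈ Finset.Ioi m, r j : ℕ) : Polynomial ℚ) *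
    ∑ t ∈ Finset.Ico 1 (r m), X ^ (t * ∏ q ∈ Finset.univ.erase m, r q)

/-- The signed excedance generating function `∑_π q^{exc(π)} (−1)^{cyc(π)}`. -/
noncomputable def Pgen (k : ℕ) (r : Fin k → ℕ) [∀ j, NeZero (r j)] (n : ℕ) : Polynomial ℚ :=
  ∑ π : GElt k n r, (-1) ^ (cyc π.2) * X ^ (exc r π)

/-- The signed excedance generating function over derangements. -/
noncomputable def Qgen (k : ℕ) (r : Fin k → ℕ) [∀ j, NeZero (r j)] (n : ℕ) : Polynomial ℚ :=
  ∑ π ∈ Finset.univ.filter (fun π : GElt k n r => ∀ i, π.2 i ≠ i),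
    (-1) ^ (cyc π.2) * X ^ (exc r π)

/-- Wreath product multiplication `(Z,τ)·(U,σ) = ((z_i + u_{τ⁻¹(i)}), τ∘σ)`. -/
def wmul {k n : ℕ} {r : Fin k → ℕ} (p q : GElt k n r) : GElt k n r :=
  (fun i => p.1 i + q.1 (p.2⁻¹ i), p.2 * q.2)

/-- The identity of the wreath product. -/
def wone {k n : ℕ} {r : Fin k → ℕ} : GElt k n r := (fun _ => 0, 1)

/-- Number of absolute fixed points. -/
def fixn {n : ℕ} (σ : Equiv.Perm (Fin n)) : ℕ :=
  (Finset.univ.filter fun i => σ i = i).card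

/-- `ε`: the number of even `r_i`. -/
def epsn (k : ℕ) (r : Fin k → ℕ) : ℕ := (Finset.univ.filter fun i => 2 ∣ r i).card

/-- `f_n(u,v,w) = ∑_{π involution} u^{fix(π)} v^{exc_A(π)} w^{csum(π)}`,
with `u = X 0`, `v = X 1`, `w = X 2`. -/
noncomputable def fgen (k : ℕ) (r : Fin k → ℕ) [∀ j, NeZero (r j)] (n : ℕ) :
    MvPolynomial (Fin 3) ℚ :=
  ∑ π ∈ Finset.univ.filter (fun π : GElt k n r => wmul π π = wone),
    (MvPolynomial.X 0) ^ (fixn π.2) * (MvPolynomial.X 1) ^ (excA r π) *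
      (MvPolynomial.X 2) ^ (csum r π.1)

/-- `μ = 1` if `r` is odd, `μ = 1 + 2^ε w^{r/2}` if `r` is even. -/
noncomputable def muP (k : ℕ) (r : Fin k → ℕ) : MvPolynomial (Fin 3) ℚ :=
  if 2 ∣ totR k r then 1 + (2 ^ (epsn k r) : MvPolynomial (Fin 3) ℚ) *
    (MvPolynomial.X 2) ^ (totR k r / 2) else 1


section DetPart
open Matrix
variable {R : Type*} [CommRing R]

def Mmat (A B : R) (n : ℕ) : Matrix (Fin n) (Fin n) R :=
  fun i j => if (i:ℕ) < (j:ℕ) then A else if (j:ℕ) < (i:ℕ) then B else 0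

def Nmat (A B : R) (n : ℕ) : Matrix (Fin n) (Fin n) R :=
  fun i j => if (j:ℕ) = n - 1 then A
    else if (i:ℕ) < (j:ℕ) then A else if (j:ℕ) < (i:ℕ) then B else 0

lemma neg_one_pow_two_mul_add_one (m : ℕ) : ((-1:R))^(m+1+m) = -1 := by
  have h : m+1+m = 2*m+1 := by omega
  rw [h, pow_succ, pow_mul]; simp

lemma det_Nmat (A B : R) (m : ℕ) : (Nmat A B (m+1)).det = (-B)^m * A := by
  induction m with
  | zero => simp [Nmat, Matrix.det_fin_one]
  | succ m ih =>
    set M := Nmat A B (m+2) with hM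
    have hne : (Fin.last (m+1)) ≠ (⟨m, by omega⟩ : Fin (m+2)) := by
      simp [Fin.ext_iff]
    have key := Matrix.det_updateRow_add_smul_self M hne (-1)
    have hrow : (M (Fin.last (m+1)) + (-1 : R) • M ⟨m, by omega⟩)
        = (fun j : Fin (m+2) => if (j:ℕ) = m then B else 0) := by
      funext j
      simp only [hM, Nmat, Pi.add_apply, Pi.smul_apply, smul_eq_mul, Fin.last]
      rcases Nat.lt_trichotomy (j:ℕ) m with h | h | h
      · have h0 : ¬ ((j:ℕ) = m+2-1) := by omega
        have h1 : ¬ ((m+1:ℕ) < (j:ℕ)) := by omega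
        have h2 : (j:ℕ) < m+1 := by omega
        have h3 : ¬ ((m:ℕ) < (j:ℕ)) := by omega
        have h5 : ¬ ((j:ℕ) = m) := by omega
        simp only [h0, h1, h2, h3, h, h5, if_false, if_true]
        first | ring1 | (split_ifs <;> first | ring1 | omega)
      · have h0 : ¬ ((j:ℕ) = m+2-1) := by omega
        have h2 : (m:ℕ) < m+1 := by omega
        simp only [h0, h, Nat.lt_irrefl, h2, if_false, if_true]
        split_ifs <;> first | ring1 | omega
      · have hj : (j:ℕ) = m+1 := by omega
        have h0 : ((j:ℕ) = m+2-1) := by omega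
        have h5 : ¬ ((j:ℕ) = m) := by omega
        simp only [h0, h5, if_true, if_false]
        split_ifs <;> first | ring1 | omega
    rw [← key, hrow]
    rw [Matrix.det_succ_row _ (Fin.last (m+1))]
    rw [Finset.sum_eq_single (⟨m, by omega⟩ : Fin (m+2))]
    · rw [Matrix.updateRow_self, Matrix.submatrix_updateRow_succAbove]
      simp only [if_pos rfl]
      have hsub : M.submatrix (Fin.last (m+1)).succAbove
          (⟨m, by omega⟩ : Fin (m+2)).succAbove = Nmat A B (m+1) := by
        ext a b
        simp only [Matrix.submatrix_apply, hM, Nmat]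
        have hrowi : ((Fin.last (m+1)).succAbove a : ℕ) = (a:ℕ) := by
          simp [Fin.succAbove_last]
        have hcol : (((⟨m, by omega⟩ : Fin (m+2)).succAbove b : ℕ))
            = if (b:ℕ) < m then (b:ℕ) else (b:ℕ)+1 := by
          rcases lt_or_ge (b:ℕ) m with h | h
          · rw [if_pos h, Fin.succAbove_of_castSucc_lt, Fin.coe_castSucc]
            rw [Fin.lt_def]; simpa using h
          · rw [if_neg (by omega), Fin.succAbove_of_le_castSucc, Fin.val_succ]
            rw [Fin.le_def]; simpa using h
        rw [hrowi, hcol]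
        split_ifs <;> first | rfl | omega
      rw [hsub, ih]
      rw [show ((Fin.last (m+1) : Fin (m+2)) : ℕ) + ((⟨m, by omega⟩ : Fin (m+2)) : ℕ) = m+1+m
        from by simp [Fin.val_last]]
      rw [neg_one_pow_two_mul_add_one, pow_succ]
      simp only [if_true]
      ring
    · intro j _ hj
      rw [Matrix.updateRow_self]
      have : ¬ ((j:ℕ) = m) := by
        intro h; apply hj; apply Fin.ext; simpa using h
      simp [this]
    · simp

lemma det_Mmat_succ (A B : R) (m : ℕ) :
    (Mmat A B (m+2)).det = -A * (Mmat A B (m+1)).det - B * ((-B)^m * A) := by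
  set M := Mmat A B (m+2) with hM
  have hne : (Fin.last (m+1)) ≠ (⟨m, by omega⟩ : Fin (m+2)) := by
    simp [Fin.ext_iff]
  have key := Matrix.det_updateRow_add_smul_self M hne (-1)
  have hrow : (M (Fin.last (m+1)) + (-1:R) • M ⟨m, by omega⟩)
      = (fun j : Fin (m+2) => if (j:ℕ) = m then B else if (j:ℕ) = m+1 then -A else 0) := by
    funext j
    have hl : ((Fin.last (m+1) : Fin (m+2)) : ℕ) = m+1 := rfl
    have hm : ((⟨m, by omega⟩ : Fin (m+2)) : ℕ) = m := rfl
    have hj : (j:ℕ) < m+2 := j.isLt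
    simp only [hM, Mmat, Pi.add_apply, Pi.smul_apply, smul_eq_mul, hl, hm]
    split_ifs <;> first | ring1 | omega
  rw [← key, hrow]
  rw [Matrix.det_succ_row _ (Fin.last (m+1))]
  rw [Fin.sum_univ_castSucc, Fin.sum_univ_castSucc]
  have hz : (∑ c : Fin m,
      (-1:R) ^ ((Fin.last (m+1) : Fin (m+2)) + (((c.castSucc).castSucc : Fin (m+2))) : ℕ) *
        (M.updateRow (Fin.last (m+1))
          (fun j : Fin (m+2) => if (j:ℕ) = m then B else if (j:ℕ) = m+1 then -A else 0))
          (Fin.last (m+1)) ((c.castSucc).castSucc) *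
        ((M.updateRow (Fin.last (m+1))
          (fun j : Fin (m+2) => if (j:ℕ) = m then B else if (j:ℕ) = m+1 then -A else 0)).submatrix
          (Fin.last (m+1)).succAbove ((c.castSucc).castSucc).succAbove).det) = 0 := by
    apply Finset.sum_eq_zero
    intro c _
    rw [Matrix.updateRow_self]
    have hc := c.isLt
    have h1 : ¬ (c : ℕ) = m := by omega
    have h2 : ¬ (c : ℕ) = m+1 := by omega
    simp [Fin.coe_castSucc, h1, h2]
  rw [hz, zero_add]
  rw [Matrix.submatrix_updateRow_succAbove, Matrix.submatrix_updateRow_succAbove]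
  have hv1 : (((Fin.last m).castSucc : Fin (m+2)) : ℕ) = m := rfl
  have hv2 : ((Fin.last (m+1) : Fin (m+2)) : ℕ) = m+1 := rfl
  have hsub1 : M.submatrix (Fin.last (m+1)).succAbove
      ((Fin.last m).castSucc : Fin (m+2)).succAbove = Nmat A B (m+1) := by
    ext a b
    simp only [Matrix.submatrix_apply, hM, Mmat, Nmat]
    have hrowi : ((Fin.last (m+1)).succAbove a : ℕ) = (a:ℕ) := by
      simp [Fin.succAbove_last]
    have hcol : ((((Fin.last m).castSucc : Fin (m+2)).succAbove b : ℕ))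
        = if (b:ℕ) < m then (b:ℕ) else (b:ℕ)+1 := by
      rcases lt_or_ge (b:ℕ) m with h | h
      · rw [if_pos h, Fin.succAbove_of_castSucc_lt, Fin.coe_castSucc]
        rw [Fin.lt_def]; simpa using h
      · rw [if_neg (by omega), Fin.succAbove_of_le_castSucc, Fin.val_succ]
        rw [Fin.le_def]; simpa using h
    have hb := b.isLt
    have ha := a.isLt
    rw [hrowi, hcol]
    split_ifs <;> first | rfl | omega
  have hsub2 : M.submatrix (Fin.last (m+1)).succAbove
      (Fin.last (m+1)).succAbove = Mmat A B (m+1) := by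
    ext a b
    simp only [Matrix.submatrix_apply, hM, Mmat]
    have hrowi : ((Fin.last (m+1)).succAbove a : ℕ) = (a:ℕ) := by
      simp [Fin.succAbove_last]
    have hcoli : ((Fin.last (m+1)).succAbove b : ℕ) = (b:ℕ) := by
      simp [Fin.succAbove_last]
    rw [hrowi, hcoli]
  rw [hsub1, hsub2, det_Nmat, hv1, hv2]
  norm_num
  ring

lemma det_Mmat_closed (A B : R) (m : ℕ) :
    (Mmat A B (m+1)).det = (-1)^m * ∑ j ∈ Finset.range m, A^(j+1) * B^(m-j) := by
  induction m with
  | zero => simp [Mmat, Matrix.det_fin_one]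
  | succ m ih =>
    rw [det_Mmat_succ, ih, Finset.sum_range_succ' (fun j => A^(j+1) * B^(m+1-j)) m]
    have h1 : ∑ i ∈ Finset.range m, A^(i+1+1) * B^(m+1-(i+1))
        = A * ∑ j ∈ Finset.range m, A^(j+1) * B^(m-j) := by
      rw [Finset.mul_sum]
      apply Finset.sum_congr rfl
      intro i hi
      have h2 : m+1-(i+1) = m-i := by omega
      rw [h2]; ring
    rw [h1]
    have h3 : ((-B)^m : R) = (-1)^m * B^m := by rw [neg_pow]
    rw [h3]; simp only [Nat.sub_zero]
    ring

lemma derangement_sum (n : ℕ) (A B : R) :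
    ∑ σ ∈ Finset.univ.filter (fun σ : Equiv.Perm (Fin n) => ∀ i, σ i ≠ i),
      (-1:R)^(cyc σ) * A^((Finset.univ.filter fun i => i < σ i).card)
        * B^(n - (Finset.univ.filter fun i => i < σ i).card)
    = (-1)^n * (Mmat B A n).det := by
  rw [Matrix.det_apply']
  rw [← Finset.sum_filter_add_sum_filter_not Finset.univ
    (fun σ : Equiv.Perm (Fin n) => ∀ i, σ i ≠ i)]
  have hz : ∑ σ ∈ Finset.univ.filter (fun σ : Equiv.Perm (Fin n) => ¬ ∀ i, σ i ≠ i),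
      (((Equiv.Perm.sign σ : ℤ) : R)) * ∏ i, Mmat B A n (σ i) i = 0 := by
    apply Finset.sum_eq_zero
    intro σ hσ
    simp only [Finset.mem_filter, not_forall, not_not] at hσ
    obtain ⟨i, hi⟩ := hσ.2
    have : ∏ j, Mmat B A n (σ j) j = 0 := by
      apply Finset.prod_eq_zero (Finset.mem_univ i)
      simp [Mmat, hi]
    rw [this, mul_zero]
  rw [hz, add_zero, Finset.mul_sum]
  apply Finset.sum_congr rfl
  intro σ hσ
  simp only [Finset.mem_filter] at hσ
  have hder := hσ.2
  set e := (Finset.univ.filter fun i : Fin n => i < σ i).card with he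
  have hprod : ∏ i, Mmat B A n (σ i) i = A^e * B^(n - e) := by
    have hentry : ∀ i : Fin n, Mmat B A n (σ i) i = if i < σ i then A else B := by
      intro i
      have hne := hder i
      by_cases h : i < σ i
      · have h1 : (i:ℕ) < ((σ i):ℕ) := h
        simp only [Mmat]
        rw [if_pos h, if_neg (by omega), if_pos h1]
      · have h2 : ((σ i):ℕ) < (i:ℕ) := by
          have h3 : ¬ ((i:ℕ) < ((σ i):ℕ)) := h
          have h4 : ((σ i):ℕ) ≠ (i:ℕ) := fun hc => hne (Fin.ext hc)
          omega
        simp only [Mmat]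
        rw [if_neg h, if_pos h2]
    rw [Finset.prod_congr rfl (fun i _ => hentry i), Finset.prod_ite, Finset.prod_const,
      Finset.prod_const]
    have hcard := Finset.card_filter_add_card_filter_not
      (s := (Finset.univ : Finset (Fin n))) (p := fun i => i < σ i)
    rw [Finset.card_univ, Fintype.card_fin] at hcard
    have : (Finset.filter (fun i => ¬ i < σ i) Finset.univ).card = n - e := by omega
    rw [this]
  have hfix : (Finset.univ.filter fun i : Fin n => σ i = i) = ∅ :=
    Finset.filter_false_of_mem (fun i _ => hder i)
  have hsupp : σ.support = Finset.univ := by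
    ext i; simp [Equiv.Perm.mem_support, hder i]
  have hsign : ((Equiv.Perm.sign σ : ℤ) : R) = (-1 : R)^(n + σ.cycleType.card) := by
    rw [Equiv.Perm.sign_of_cycleType, Equiv.Perm.sum_cycleType, hsupp, Finset.card_univ,
      Fintype.card_fin]
    push_cast
    norm_num
  rw [hprod, hsign]
  have hcyc : cyc σ = σ.cycleType.card := by
    rw [cyc, hfix]; simp
  rw [hcyc, pow_add]
  have h2n : (-1:R)^n * (-1)^n = 1 := by
    rw [← pow_add, show n+n = 2*n from by omega, pow_mul]; norm_num
  linear_combination (-((-1:R)^(σ.cycleType.card) * (A^e * B^(n-e)))) * h2n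

end DetPart

section ColorLemmas
variable {k : ℕ} (r : Fin k → ℕ) [∀ j, NeZero (r j)]

/-- csum contribution of a single color vector. -/
def c1 (z : Color k r) : ℕ :=
  ∑ p, ((z p).val * ∏ t ∈ Finset.Iio p, if (z t).val = 0 then 1 else 0) *
    ∏ q ∈ Finset.univ.erase p, r q

lemma c1_zero {z : Color k r} (hz : ∀ j, (z j).val = 0) : c1 r z = 0 := by
  apply Finset.sum_eq_zero; intro p _; rw [hz p]; simp

lemma c1_first {z : Color k r} {s : ℕ} (hs : s < k) {t : ℕ}
    (h0 : ∀ j : Fin k, (j:ℕ) < s → (z j).val = 0)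
    (ht : (z ⟨s, hs⟩).val = t) (ht1 : 1 ≤ t) :
    c1 r z = t * ∏ q ∈ Finset.univ.erase (⟨s, hs⟩ : Fin k), r q := by
  rw [c1, Finset.sum_eq_single (⟨s, hs⟩ : Fin k)]
  · rw [ht]
    have h1 : (∏ t' ∈ Finset.Iio (⟨s,hs⟩ : Fin k),
        if (z t').val = 0 then 1 else 0) = 1 := by
      apply Finset.prod_eq_one; intro u hu
      rw [Finset.mem_Iio] at hu
      exact if_pos (h0 u hu)
    rw [h1, mul_one]
  · intro p _ hp
    rcases Nat.lt_trichotomy (p:ℕ) s with h | h | h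
    · rw [h0 p h]; simp
    · exact absurd (Fin.ext h) hp
    · have h1 : (∏ t' ∈ Finset.Iio p, if (z t').val = 0 then 1 else 0) = 0 := by
        apply Finset.prod_eq_zero (i := (⟨s,hs⟩ : Fin k))
        · rw [Finset.mem_Iio]; exact h
        · rw [if_neg (by omega)]
      rw [h1]; simp
  · simp

lemma zmod_count {M : ℕ} [NeZero M] {a : ℕ} (h : a < M) :
    (Finset.univ.filter fun v : ZMod M => v.val = a).card = 1 := by
  rw [Finset.card_eq_one]
  refine ⟨(a : ZMod M), ?_⟩
  ext v
  simp only [Finset.mem_filter, Finset.mem_univ, true_and, Finset.mem_singleton]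
  constructor
  · intro hv; rw [← hv]; exact (ZMod.natCast_rightInverse v).symm
  · intro hv; rw [hv]; exact ZMod.val_cast_of_lt h

lemma count_fiber {s : ℕ} (hs : s < k) {t : ℕ} (htlt : t < r ⟨s, hs⟩) :
    (Finset.univ.filter (fun z : Color k r =>
      (∀ j : Fin k, (j:ℕ) < s → (z j).val = 0) ∧ (z ⟨s, hs⟩).val = t)).card
    = ∏ j ∈ Finset.Ioi (⟨s, hs⟩ : Fin k), r j := by
  rw [Finset.card_filter]
  have hrw : ∀ z : Color k r,
      (if (∀ j : Fin k, ((j:ℕ) < s → (z j).val = 0)) ∧ (z ⟨s,hs⟩).val = t then (1:ℕ) else 0)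
      = ∏ j : Fin k, (if ((j:ℕ) < s → (z j).val = 0) ∧ ((j:ℕ) = s → (z j).val = t)
          then (1:ℕ) else 0) := by
    intro z
    by_cases H : (∀ j : Fin k, ((j:ℕ) < s → (z j).val = 0)) ∧ (z ⟨s,hs⟩).val = t
    · rw [if_pos H]
      symm; apply Finset.prod_eq_one
      intro j _
      rw [if_pos]
      refine ⟨fun hj => H.1 j hj, fun hj => ?_⟩
      have hje : j = ⟨s, hs⟩ := Fin.ext hj
      rw [hje]; exact H.2
    · rw [if_neg H]
      have hex : ∃ j : Fin k,
          ¬(((j:ℕ) < s → (z j).val = 0) ∧ ((j:ℕ) = s → (z j).val = t)) := by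
        by_contra hc
        push_neg at hc
        exact H ⟨fun j => (hc j).1, (hc ⟨s,hs⟩).2 rfl⟩
      obtain ⟨j, hj⟩ := hex
      symm; exact Finset.prod_eq_zero (Finset.mem_univ j) (if_neg hj)
  rw [Finset.sum_congr rfl (fun z _ => hrw z),
    ← Fintype.prod_sum (fun (j : Fin k) (v : ZMod (r j)) =>
      if ((j:ℕ) < s → v.val = 0) ∧ ((j:ℕ) = s → v.val = t) then (1:ℕ) else 0)]
  have hcoord : ∀ j : Fin k,
      (∑ v : ZMod (r j), if ((j:ℕ) < s → v.val = 0) ∧ ((j:ℕ) = s → v.val = t)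
        then (1:ℕ) else 0) = if s < (j:ℕ) then r j else 1 := by
    intro j
    rw [← Finset.card_filter]
    rcases Nat.lt_trichotomy (j:ℕ) s with h | h | h
    · rw [if_neg (by omega)]
      have hset : (Finset.univ.filter fun v : ZMod (r j) =>
          ((j:ℕ) < s → v.val = 0) ∧ ((j:ℕ) = s → v.val = t))
          = Finset.univ.filter fun v => v.val = 0 := by
        ext v
        simp only [Finset.mem_filter, Finset.mem_univ, true_and]
        constructor
        · intro hv; exact hv.1 h
        · intro hv; exact ⟨fun _ => hv, fun hc => absurd hc (by omega)⟩
      rw [hset, zmod_count (Nat.pos_of_ne_zero (NeZero.ne (r j)))]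
    · rw [if_neg (by omega)]
      have hjs : j = ⟨s, hs⟩ := Fin.ext h
      have hset : (Finset.univ.filter fun v : ZMod (r j) =>
          ((j:ℕ) < s → v.val = 0) ∧ ((j:ℕ) = s → v.val = t))
          = Finset.univ.filter fun v => v.val = t := by
        ext v
        simp only [Finset.mem_filter, Finset.mem_univ, true_and]
        constructor
        · intro hv; exact hv.2 h
        · intro hv; exact ⟨fun hc => absurd hc (by omega), fun _ => hv⟩
      rw [hset, zmod_count (by rw [hjs]; exact htlt)]
    · rw [if_pos h]
      have hset : (Finset.univ.filter fun v : ZMod (r j) =>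
          ((j:ℕ) < s → v.val = 0) ∧ ((j:ℕ) = s → v.val = t))
          = Finset.univ := by
        ext v
        simp only [Finset.mem_filter, Finset.mem_univ, true_and, iff_true]
        exact ⟨fun hc => absurd hc (by omega), fun hc => absurd hc (by omega)⟩
      rw [hset, Finset.card_univ, ZMod.card]
  rw [Finset.prod_congr rfl (fun j _ => hcoord j)]
  rw [← Finset.prod_filter]
  congr 1
  ext j
  simp [Finset.mem_Ioi, Fin.lt_def]

lemma filter_zero_eq :
    (Finset.univ.filter fun z : Color k r => ∀ j, (z j).val = 0)
      = {fun _ => 0} := by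
  ext z
  simp only [Finset.mem_filter, Finset.mem_univ, true_and, Finset.mem_singleton]
  constructor
  · intro h; funext j; exact (ZMod.val_eq_zero (z j)).mp (h j)
  · intro h j; rw [h]; exact ZMod.val_zero

lemma colorsum_partial : ∀ d s, s + d = k →
    (∑ z ∈ Finset.univ.filter
        (fun z : Color k r => ∀ j : Fin k, (j:ℕ) < s → (z j).val = 0),
      (X : Polynomial ℚ) ^ (c1 r z))
    = 1 + ∑ m ∈ Finset.univ.filter (fun m : Fin k => s ≤ (m:ℕ)),
        ((∏ j ∈ Finset.Ioi m, r j : ℕ) : Polynomial ℚ) *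
          ∑ t ∈ Finset.Ico 1 (r m), X ^ (t * ∏ q ∈ Finset.univ.erase m, r q) := by
  intro d
  induction d with
  | zero =>
    intro s hsk
    have hks : k ≤ s := by omega
    have hfil : (Finset.univ.filter (fun m : Fin k => s ≤ (m:ℕ))) = ∅ := by
      ext m; simp only [Finset.mem_filter, Finset.mem_univ, true_and,
        Finset.notMem_empty, iff_false]
      have := m.isLt; omega

    have hzfil : (Finset.univ.filter
        (fun z : Color k r => ∀ j : Fin k, (j:ℕ) < s → (z j).val = 0))
        = {fun _ => 0} := by
      rw [← filter_zero_eq r]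
      apply Finset.filter_congr
      intro z _
      constructor
      · intro h j; exact h j (by have := j.isLt; omega)
      · intro h j _; exact h j
    rw [hfil, hzfil, Finset.sum_singleton, Finset.sum_empty, add_zero,
      c1_zero r (fun j => ZMod.val_zero), pow_zero]
  | succ d ih =>
    intro s hsk
    have hs : s < k := by omega
    rw [← Finset.sum_filter_add_sum_filter_not
      (Finset.univ.filter
        (fun z : Color k r => ∀ j : Fin k, (j:ℕ) < s → (z j).val = 0))
      (fun z => (z ⟨s, hs⟩).val = 0)]
    have hA : (Finset.univ.filter
          (fun z : Color k r => ∀ j : Fin k, (j:ℕ) < s → (z j).val = 0)).filter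
          (fun z => (z ⟨s, hs⟩).val = 0)
        = Finset.univ.filter
          (fun z : Color k r => ∀ j : Fin k, (j:ℕ) < s + 1 → (z j).val = 0) := by
      rw [Finset.filter_filter]
      apply Finset.filter_congr
      intro z _
      constructor
      · rintro ⟨h1, h2⟩ j hj
        rcases Nat.lt_or_ge (j:ℕ) s with h | h
        · exact h1 j h
        · have : j = ⟨s, hs⟩ := Fin.ext (show (j:ℕ) = s by omega)
          rw [this]; exact h2
      · intro h
        exact ⟨fun j hj => h j (by omega), h ⟨s, hs⟩ (by simp)⟩
    rw [hA, ih (s+1) (by omega)]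
    -- part B : colors with first nonzero coordinate at position s
    have hB : (∑ z ∈ (Finset.univ.filter
          (fun z : Color k r => ∀ j : Fin k, (j:ℕ) < s → (z j).val = 0)).filter
          (fun z => ¬ (z ⟨s, hs⟩).val = 0), (X : Polynomial ℚ) ^ (c1 r z))
        = ((∏ j ∈ Finset.Ioi (⟨s, hs⟩ : Fin k), r j : ℕ) : Polynomial ℚ) *
          ∑ t ∈ Finset.Ico 1 (r ⟨s, hs⟩),
            X ^ (t * ∏ q ∈ Finset.univ.erase (⟨s, hs⟩ : Fin k), r q) := by
      have hmap : ∀ z : Color k r, z ∈ (Finset.univ.filter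
          (fun z : Color k r => ∀ j : Fin k, (j:ℕ) < s → (z j).val = 0)).filter
          (fun z => ¬ (z ⟨s, hs⟩).val = 0) →
          (z ⟨s, hs⟩).val ∈ Finset.Ico 1 (r ⟨s, hs⟩) := by
        intro z hz
        simp only [Finset.mem_filter] at hz
        rw [Finset.mem_Ico]
        exact ⟨by omega, ZMod.val_lt _⟩
      rw [← Finset.sum_fiberwise_of_maps_to hmap
        (fun z : Color k r => (X : Polynomial ℚ) ^ (c1 r z))]
      rw [Finset.mul_sum]
      apply Finset.sum_congr rfl
      intro t ht
      rw [Finset.mem_Ico] at ht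
      have hfib : ((Finset.univ.filter
            (fun z : Color k r => ∀ j : Fin k, (j:ℕ) < s → (z j).val = 0)).filter
            (fun z => ¬ (z ⟨s, hs⟩).val = 0)).filter
            (fun z => (z ⟨s, hs⟩).val = t)
          = Finset.univ.filter (fun z : Color k r =>
            (∀ j : Fin k, (j:ℕ) < s → (z j).val = 0) ∧ (z ⟨s, hs⟩).val = t) := by
        rw [Finset.filter_filter, Finset.filter_filter]
        apply Finset.filter_congr
        intro z _
        constructor
        · rintro ⟨h1, _, h3⟩; exact ⟨h1, h3⟩
        · rintro ⟨h1, h2⟩; exact ⟨h1, by omega, h2⟩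
      rw [hfib]
      have hval : ∀ z ∈ Finset.univ.filter (fun z : Color k r =>
          (∀ j : Fin k, (j:ℕ) < s → (z j).val = 0) ∧ (z ⟨s, hs⟩).val = t),
          (X : Polynomial ℚ) ^ (c1 r z)
            = X ^ (t * ∏ q ∈ Finset.univ.erase (⟨s, hs⟩ : Fin k), r q) := by
        intro z hz
        simp only [Finset.mem_filter] at hz
        rw [c1_first r hs hz.2.1 hz.2.2 (by omega)]
      rw [Finset.sum_congr rfl hval, Finset.sum_const, count_fiber r hs (by omega),
        nsmul_eq_mul]
    rw [hB]
    -- reassemble the RHS index set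
    have hins : (Finset.univ.filter (fun m : Fin k => s ≤ (m:ℕ)))
        = insert (⟨s, hs⟩ : Fin k)
            (Finset.univ.filter (fun m : Fin k => s + 1 ≤ (m:ℕ))) := by
      ext m
      simp only [Finset.mem_filter, Finset.mem_univ, true_and, Finset.mem_insert]
      constructor
      · intro h
        rcases Nat.eq_or_lt_of_le h with h' | h'
        · left; exact Fin.ext h'.symm
        · right; omega
      · rintro (h | h)
        · rw [h]
        · omega
    rw [hins, Finset.sum_insert (by simp)]
    ring

lemma colorsum_univ :
    (∑ z : Color k r, (X : Polynomial ℚ) ^ (c1 r z)) = 1 + Kpoly k r := by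
  have h := colorsum_partial r k 0 (by omega)
  have h1 : (Finset.univ.filter
      (fun z : Color k r => ∀ j : Fin k, (j:ℕ) < 0 → (z j).val = 0))
      = Finset.univ := by
    apply Finset.filter_true_of_mem; intro z _ j hj; omega
  have h2 : (Finset.univ.filter (fun m : Fin k => 0 ≤ (m:ℕ))) = Finset.univ := by
    apply Finset.filter_true_of_mem; intro m _; omega
  rw [h1, h2] at h
  rw [h, Kpoly]

lemma colorsum_nonzero :
    (∑ z ∈ Finset.univ.filter (fun z : Color k r => ¬ ∀ j, (z j).val = 0),
      (X : Polynomial ℚ) ^ (c1 r z)) = Kpoly k r := by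
  have h := colorsum_univ r
  rw [← Finset.sum_filter_add_sum_filter_not Finset.univ
    (fun z : Color k r => ∀ j, (z j).val = 0), filter_zero_eq r,
    Finset.sum_singleton, c1_zero r (fun j => ZMod.val_zero), pow_zero] at h
  exact add_left_cancel h

lemma colorsum_withexc :
    (∑ z : Color k r, (X : Polynomial ℚ) ^
        ((if (∀ j, (z j).val = 0) then totR k r else 0) + c1 r z))
      = X ^ (totR k r) + Kpoly k r := by
  rw [← Finset.sum_filter_add_sum_filter_not Finset.univ
    (fun z : Color k r => ∀ j, (z j).val = 0)]
  have hzero : (∑ z ∈ Finset.univ.filter (fun z : Color k r => ∀ j, (z j).val = 0),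
      (X : Polynomial ℚ) ^ ((if (∀ j, (z j).val = 0) then totR k r else 0) + c1 r z))
      = X ^ (totR k r) := by
    rw [filter_zero_eq r, Finset.sum_singleton, if_pos (fun j => ZMod.val_zero),
      c1_zero r (fun j => ZMod.val_zero), add_zero]
  have hnz : (∑ z ∈ Finset.univ.filter (fun z : Color k r => ¬ ∀ j, (z j).val = 0),
      (X : Polynomial ℚ) ^ ((if (∀ j, (z j).val = 0) then totR k r else 0) + c1 r z))
      = Kpoly k r := by
    rw [← colorsum_nonzero r]
    apply Finset.sum_congr rfl
    intro z hz
    simp only [Finset.mem_filter] at hz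
    rw [if_neg hz.2, zero_add]
  rw [hzero, hnz]

end ColorLemmas

section MainReduction
variable {k : ℕ} (r : Fin k → ℕ) [∀ j, NeZero (r j)]

lemma csum_eq_sum {n : ℕ} (Z : Fin n → Color k r) : csum r Z = ∑ i, c1 r (Z i) := by
  rw [csum]
  simp_rw [csump, Finset.sum_mul]
  rw [Finset.sum_comm]
  rfl

lemma exc_eq_sum {n : ℕ} (π : GElt k n r) :
    exc r π = ∑ i, ((if (∀ j, (π.1 i j).val = 0) ∧ i < π.2 i then totR k r else 0)
      + c1 r (π.1 i)) := by
  rw [exc, excA, Finset.card_filter, Finset.mul_sum, csum_eq_sum r π.1,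
    ← Finset.sum_add_distrib]
  apply Finset.sum_congr rfl
  intro i _
  rw [mul_ite, mul_one, mul_zero]

lemma inner_color_sum {n : ℕ} (σ : Equiv.Perm (Fin n)) :
    (∑ Z : Fin n → Color k r, (X : Polynomial ℚ) ^ (exc r (Z, σ)))
    = ((X : Polynomial ℚ)^(totR k r) + Kpoly k r)
          ^ ((Finset.univ.filter fun i => i < σ i).card)
        * (1 + Kpoly k r) ^ (n - (Finset.univ.filter fun i => i < σ i).card) := by
  have hexp : ∀ Z : Fin n → Color k r, (X : Polynomial ℚ) ^ (exc r (Z, σ))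
      = ∏ i, (fun (i : Fin n) (z : Color k r) =>
          (X : Polynomial ℚ) ^ ((if (∀ j, (z j).val = 0) ∧ i < σ i then totR k r else 0)
            + c1 r z)) i (Z i) := by
    intro Z
    rw [exc_eq_sum, ← Finset.prod_pow_eq_pow_sum]
  rw [Finset.sum_congr rfl (fun Z _ => hexp Z),
    ← Fintype.prod_sum (fun (i : Fin n) (z : Color k r) =>
      (X : Polynomial ℚ) ^ ((if (∀ j, (z j).val = 0) ∧ i < σ i then totR k r else 0)
        + c1 r z))]
  have hcoord : ∀ i : Fin n,
      (∑ z : Color k r, (X : Polynomial ℚ)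
        ^ ((if (∀ j, (z j).val = 0) ∧ i < σ i then totR k r else 0) + c1 r z))
      = if i < σ i then (X : Polynomial ℚ)^(totR k r) + Kpoly k r else 1 + Kpoly k r := by
    intro i
    by_cases h : i < σ i
    · rw [if_pos h, ← colorsum_withexc r]
      apply Finset.sum_congr rfl
      intro z _
      congr 2
      simp [h]
    · rw [if_neg h, ← colorsum_univ r]
      apply Finset.sum_congr rfl
      intro z _
      have : ¬ ((∀ j, (z j).val = 0) ∧ i < σ i) := fun hc => h hc.2
      rw [if_neg this, zero_add]
  rw [Finset.prod_congr rfl (fun i _ => hcoord i), Finset.prod_ite, Finset.prod_const,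
    Finset.prod_const]
  have hcard := Finset.card_filter_add_card_filter_not
    (s := (Finset.univ : Finset (Fin n))) (p := fun i => i < σ i)
  rw [Finset.card_univ, Fintype.card_fin] at hcard
  have hneg : (Finset.filter (fun i => ¬ i < σ i) Finset.univ).card
      = n - (Finset.filter (fun i => i < σ i) Finset.univ).card := by omega
  rw [hneg]

lemma Qgen_eq_dsum (n : ℕ) :
    Qgen k r n = ∑ σ ∈ Finset.univ.filter (fun σ : Equiv.Perm (Fin n) => ∀ i, σ i ≠ i),
      (-1 : Polynomial ℚ)^(cyc σ)
        * ((X : Polynomial ℚ)^(totR k r) + Kpoly k r)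
            ^ ((Finset.univ.filter fun i => i < σ i).card)
        * (1 + Kpoly k r) ^ (n - (Finset.univ.filter fun i => i < σ i).card) := by
  rw [Qgen, Finset.sum_filter, Fintype.sum_prod_type, Finset.sum_comm, Finset.sum_filter]
  apply Finset.sum_congr rfl
  intro σ _
  by_cases h : ∀ i, σ i ≠ i
  · simp only [if_pos h]
    rw [← Finset.mul_sum, inner_color_sum r σ, mul_assoc]
  · simp only [if_neg h, Finset.sum_const_zero]

end MainReduction

lemma Qgen_closed {k : ℕ} (r : Fin k → ℕ) [∀ j, NeZero (r j)] (m : ℕ) :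
    Qgen k r (m+1) = - ∑ j ∈ Finset.range m,
      (1 + Kpoly k r)^(j+1) * ((X : Polynomial ℚ)^(totR k r) + Kpoly k r)^(m-j) := by
  rw [Qgen_eq_dsum, derangement_sum (m+1)
    (A := (X : Polynomial ℚ)^(totR k r) + Kpoly k r) (B := 1 + Kpoly k r)]
  rw [det_Mmat_closed]
  have key : ((-1 : Polynomial ℚ))^(m+1) * ((-1 : Polynomial ℚ))^m = -1 := by
    rw [← pow_add]
    exact Odd.neg_one_pow ⟨m, by omega⟩
  linear_combination (∑ j ∈ Finset.range m,
    (1 + Kpoly k r)^(j+1) * ((X : Polynomial ℚ)^(totR k r) + Kpoly k r)^(m-j)) * key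

theorem Qgen_recurrence (k : ℕ) (r : Fin k → ℕ) [∀ j, NeZero (r j)]
    (hk : 1 ≤ k) (hr : ∀ j, 1 ≤ r j) (n : ℕ) (hn : 2 ≤ n) :
    Qgen k r n = (1 + Kpoly k r) *
      (Qgen k r (n - 1) - ((X : Polynomial ℚ) ^ totR k r + Kpoly k r) ^ (n - 1)) := by
  obtain ⟨m, rfl⟩ : ∃ m, n = m + 2 := ⟨n - 2, by omega⟩
  have h1 : m + 2 - 1 = m + 1 := by omega
  rw [h1, Qgen_closed r (m+1), Qgen_closed r m]
  rw [Finset.sum_range_succ'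
    (fun j => (1 + Kpoly k r)^(j+1) *
      ((X : Polynomial ℚ)^(totR k r) + Kpoly k r)^(m+1-j)) m]
  have hre : (∑ i ∈ Finset.range m, (1 + Kpoly k r)^(i+1+1) *
        ((X : Polynomial ℚ)^(totR k r) + Kpoly k r)^(m+1-(i+1)))
      = (1 + Kpoly k r) * ∑ j ∈ Finset.range m, (1 + Kpoly k r)^(j+1) *
        ((X : Polynomial ℚ)^(totR k r) + Kpoly k r)^(m-j) := by
    rw [Finset.mul_sum]
    apply Finset.sum_congr rfl
    intro i hi
    rw [show m+1-(i+1) = m-i from by omega]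
    ring
  rw [hre]
  simp only [Nat.sub_zero, zero_add, pow_one]
  ring
end
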